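/- Let B be a finite Blaschke product of order n ≥ 1. For every w ∈ 𝔻, the set {z ∈ 𝔻 : B(z) = w} is finite and nonempty, and the zeros of z ↦ B(z) − w in 𝔻 counted with multiplicity number exactly n; that is, ∑_{z ∈ 𝔻, B(z) = w} ord_z(B − w) = n, where ord_z(B − w) denotes the order of vanishing of B(·) − w at z. -/

import Mathlib

/-! On the disc, `B - w = P / D` with `D(z) = ∏ (1 - conj aₖ z)` zero-free there and
`P = e^{iθ} ∏ (X - aₖ) - w D` a polynomial whose coefficient of `Xⁿ`, namely
`e^{iθ} - w ∏ (-conj aₖ)`, is nonzero because `|w| < 1`. For `|z| ≥ 1` every factor satisfies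
`|1 - conj aₖ z| ≤ |z - aₖ|`, so `P` has no roots off the disc. Hence the solutions of `B = w`
in the disc are the `n` roots of `P`, and the order of vanishing of `B - w = P / D` at each of
them is its multiplicity as a root of `P`. -/

open Metric

/-- A finite Blaschke product of order `n`: on the unit disc, `B` is given by
`B(z) = e^{iθ} ∏_{k=1}^{n} (z - a_k)/(1 - conj(a_k) z)` with `a_1, …, a_n ∈ 𝔻`. -/
def IsBlaschke (n : ℕ) (B : ℂ → ℂ) : Prop :=
  ∃ (θ : ℝ) (a : Fin n → ℂ), (∀ k, a k ∈ Metric.ball (0 : ℂ) 1) ∧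
    ∀ z ∈ Metric.ball (0 : ℂ) 1,
      B z = Complex.exp (θ * Complex.I) *
        ∏ k, (z - a k) / (1 - (starRingEnd ℂ) (a k) * z)

/-- The order of vanishing of `f` at `z`: the least `m` such that the `m`-th
complex derivative of `f` at `z` is nonzero (`0` if `f z ≠ 0`). -/
noncomputable def vanishOrder (f : ℂ → ℂ) (z : ℂ) : ℕ :=
  sInf {m : ℕ | iteratedDeriv m f z ≠ 0}

open Topology Filter Polynomial ComplexConjugate

theorem Polynomial.analyticOrderAt_eval_div_eval {𝕜 : Type*} [NontriviallyNormedField 𝕜]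
    {p q : 𝕜[X]} {z : 𝕜} (hp : p ≠ 0)
    (hq : q.eval z ≠ 0) :
    analyticOrderAt (fun x => p.eval x / q.eval x) z = p.rootMultiplicity z := by
  set r := p /ₘ (X - C z) ^ p.rootMultiplicity z
  have hr : r.eval z ≠ 0 := eval_divByMonic_pow_rootMultiplicity_ne_zero z hp
  have hfactor : p = (X - C z) ^ p.rootMultiplicity z * r :=
    (pow_mul_divByMonic_rootMultiplicity_eq p z).symm
  refine (AnalyticAt.analyticOrderAt_eq_natCast ?_).2
    ⟨fun x => r.eval x / q.eval x, ?_, div_ne_zero hr hq, .of_forall fun x => ?_⟩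
  · exact (AnalyticOnNhd.eval_polynomial p z trivial).div
      (AnalyticOnNhd.eval_polynomial q z trivial) hq
  · exact (AnalyticOnNhd.eval_polynomial r z trivial).div
      (AnalyticOnNhd.eval_polynomial q z trivial) hq
  · conv_lhs => rw [hfactor]
    simp [mul_div_assoc]

theorem vanishOrder_eq_of_analyticOrderAt_eq {f : ℂ → ℂ} {z : ℂ} {m : ℕ}
    (hf : AnalyticAt ℂ f z) (h : analyticOrderAt f z = m) : vanishOrder f z = m := by
  obtain ⟨hlt, hm⟩ := (analyticOrderAt_eq_nat_iff_iteratedDeriv_eq_zero hf).1 h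
  exact le_antisymm (Nat.sInf_le hm)
    (le_csInf ⟨m, hm⟩ fun k hk => not_lt.1 fun hkm => hk (hlt k hkm))

theorem vanishOrder_eq_rootMultiplicity {f : ℂ → ℂ} {p q : ℂ[X]} {z : ℂ} (hp : p ≠ 0)
    (hq : q.eval z ≠ 0) (hf : f =ᶠ[𝓝 z] fun x => p.eval x / q.eval x) :
    vanishOrder f z = p.rootMultiplicity z := by
  have hpq : AnalyticAt ℂ (fun x => p.eval x / q.eval x) z :=
    (AnalyticOnNhd.eval_polynomial p z trivial).div
      (AnalyticOnNhd.eval_polynomial q z trivial) hq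
  refine vanishOrder_eq_of_analyticOrderAt_eq (hpq.congr hf.symm) ?_
  rw [analyticOrderAt_congr hf, analyticOrderAt_eval_div_eval hp hq]

theorem Complex.normSq_sub_sub_normSq_one_sub_conj_mul (a z : ℂ) :
    normSq (z - a) - normSq (1 - conj a * z) = (normSq z - 1) * (1 - normSq a) := by
  simp only [normSq_apply, sub_re, sub_im, mul_re, mul_im, one_re, one_im, conj_re, conj_im]
  ring

theorem Complex.one_sub_conj_mul_ne_zero {a z : ℂ} (ha : ‖a‖ < 1) (hz : ‖z‖ < 1) :
    1 - conj a * z ≠ 0 := by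
  refine sub_ne_zero.2 fun h => ?_
  have : ‖conj a * z‖ < 1 := by
    rw [norm_mul, RCLike.norm_conj]
    exact mul_lt_one_of_nonneg_of_lt_one_left (norm_nonneg a) ha hz.le
  simp [← h] at this

theorem Complex.norm_one_sub_conj_mul_le_norm_sub {a z : ℂ} (ha : ‖a‖ ≤ 1) (hz : 1 ≤ ‖z‖) :
    ‖1 - conj a * z‖ ≤ ‖z - a‖ := by
  have hnormSq : normSq (1 - conj a * z) ≤ normSq (z - a) := by
    have := normSq_sub_sub_normSq_one_sub_conj_mul a z
    have hz' : 1 ≤ normSq z := by rw [normSq_eq_norm_sq]; nlinarith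
    have ha' : normSq a ≤ 1 := by rw [normSq_eq_norm_sq]; nlinarith [norm_nonneg a]
    nlinarith
  rw [normSq_eq_norm_sq, normSq_eq_norm_sq] at hnormSq
  exact le_of_sq_le_sq hnormSq (norm_nonneg _)

theorem Polynomial.natDegree_one_sub_C_mul_X_le {R : Type*} [CommRing R] (r : R) :
    (1 - C r * X).natDegree ≤ 1 := by
  compute_degree

section BlaschkeFiber

variable {ι : Type*} [Fintype ι]

theorem Polynomial.natDegree_prod_le_card {R : Type*} [CommSemiring R] {f : ι → R[X]}
    (hf : ∀ k, (f k).natDegree ≤ 1) : (∏ k, f k).natDegree ≤ Fintype.card ι := by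
  calc (∏ k, f k).natDegree ≤ ∑ k, (f k).natDegree := natDegree_prod_le _ _
    _ ≤ ∑ _k : ι, 1 := Finset.sum_le_sum fun k _ => hf k
    _ = Fintype.card ι := by simp

noncomputable def blaschkeDenominator (a : ι → ℂ) : ℂ[X] :=
  ∏ k, (1 - C (conj (a k)) * X)

noncomputable def blaschkeFiberPoly (c w : ℂ) (a : ι → ℂ) : ℂ[X] :=
  C c * ∏ k, (X - C (a k)) - C w * blaschkeDenominator a

theorem eval_blaschkeDenominator (a : ι → ℂ) (z : ℂ) :
    (blaschkeDenominator a).eval z = ∏ k, (1 - conj (a k) * z) := by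
  simp [blaschkeDenominator, eval_prod]

theorem eval_blaschkeFiberPoly (c w : ℂ) (a : ι → ℂ) (z : ℂ) :
    (blaschkeFiberPoly c w a).eval z = c * ∏ k, (z - a k) - w * ∏ k, (1 - conj (a k) * z) := by
  simp [blaschkeFiberPoly, eval_blaschkeDenominator, eval_prod]

theorem eval_blaschkeDenominator_ne_zero {a : ι → ℂ} (ha : ∀ k, ‖a k‖ < 1) {z : ℂ}
    (hz : ‖z‖ < 1) : (blaschkeDenominator a).eval z ≠ 0 := by
  rw [eval_blaschkeDenominator]
  exact Finset.prod_ne_zero_iff.2 fun k _ => Complex.one_sub_conj_mul_ne_zero (ha k) hz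

theorem blaschke_sub_eq_eval_div_eval {a : ι → ℂ} (ha : ∀ k, ‖a k‖ < 1) (c w : ℂ) {z : ℂ}
    (hz : ‖z‖ < 1) :
    c * ∏ k, (z - a k) / (1 - conj (a k) * z) - w =
      (blaschkeFiberPoly c w a).eval z / (blaschkeDenominator a).eval z := by
  have hD := eval_blaschkeDenominator_ne_zero ha hz
  rw [eval_blaschkeFiberPoly, ← eval_blaschkeDenominator, sub_div, mul_div_cancel_right₀ w hD,
    mul_div_assoc, eval_blaschkeDenominator, Finset.prod_div_distrib]

theorem coeff_blaschkeFiberPoly_card (c w : ℂ) (a : ι → ℂ) :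
    (blaschkeFiberPoly c w a).coeff (Fintype.card ι) = c - w * ∏ k, -conj (a k) := by
  have hnum := coeff_prod_of_natDegree_le (s := .univ) (fun k => X - C (a k)) 1
    fun k _ => (natDegree_X_sub_C (a k)).le
  have hden := coeff_prod_of_natDegree_le (s := .univ) (fun k => 1 - C (conj (a k)) * X) 1
    fun k _ => natDegree_one_sub_C_mul_X_le _
  simp only [Finset.card_univ, mul_one] at hnum hden
  rw [blaschkeFiberPoly, blaschkeDenominator, coeff_sub, coeff_C_mul, coeff_C_mul, hnum, hden]
  simp [coeff_one]

theorem coeff_blaschkeFiberPoly_card_ne_zero {a : ι → ℂ} (ha : ∀ k, ‖a k‖ ≤ 1) {c w : ℂ}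
    (hw : ‖w‖ < ‖c‖) : (blaschkeFiberPoly c w a).coeff (Fintype.card ι) ≠ 0 := by
  rw [coeff_blaschkeFiberPoly_card, sub_ne_zero]
  refine fun h => hw.not_ge ?_
  calc ‖c‖ = ‖w‖ * ∏ k, ‖a k‖ := by simp [h, norm_prod]
    _ ≤ ‖w‖ * 1 := by gcongr; exact Finset.prod_le_one (fun k _ => norm_nonneg _) fun k _ => ha k
    _ = ‖w‖ := mul_one _

theorem natDegree_blaschkeFiberPoly {a : ι → ℂ} (ha : ∀ k, ‖a k‖ ≤ 1) {c w : ℂ}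
    (hw : ‖w‖ < ‖c‖) : (blaschkeFiberPoly c w a).natDegree = Fintype.card ι := by
  have hle : (blaschkeFiberPoly c w a).natDegree ≤ Fintype.card ι :=
    (natDegree_sub_le _ _).trans <| max_le
      ((natDegree_C_mul_le _ _).trans <|
        natDegree_prod_le_card fun k => (natDegree_X_sub_C _).le)
      ((natDegree_C_mul_le _ _).trans <|
        natDegree_prod_le_card fun k => natDegree_one_sub_C_mul_X_le _)
  exact le_antisymm hle (le_natDegree_of_ne_zero (coeff_blaschkeFiberPoly_card_ne_zero ha hw))

theorem blaschkeFiberPoly_ne_zero {a : ι → ℂ} (ha : ∀ k, ‖a k‖ ≤ 1) {c w : ℂ}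
    (hw : ‖w‖ < ‖c‖) : blaschkeFiberPoly c w a ≠ 0 :=
  fun h => coeff_blaschkeFiberPoly_card_ne_zero ha hw (by rw [h, coeff_zero])

theorem norm_lt_one_of_isRoot_blaschkeFiberPoly {a : ι → ℂ} (ha : ∀ k, ‖a k‖ < 1) {c w : ℂ}
    (hw : ‖w‖ < ‖c‖) {z : ℂ} (hz : (blaschkeFiberPoly c w a).IsRoot z) : ‖z‖ < 1 := by
  by_contra! hz1
  have hpos : 0 < ∏ k, ‖z - a k‖ :=
    Finset.prod_pos fun k _ => norm_pos_iff.2 <| sub_ne_zero.2 fun h => by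
      have := ha k; rw [← h] at this; linarith
  have hle : ∏ k, ‖1 - conj (a k) * z‖ ≤ ∏ k, ‖z - a k‖ :=
    Finset.prod_le_prod (fun _ _ => norm_nonneg _)
      fun k _ => Complex.norm_one_sub_conj_mul_le_norm_sub (ha k).le hz1
  have heq : ‖c‖ * ∏ k, ‖z - a k‖ = ‖w‖ * ∏ k, ‖1 - conj (a k) * z‖ := by
    have := congrArg norm (sub_eq_zero.1 <| (eval_blaschkeFiberPoly c w a z).symm.trans hz)
    simpa only [norm_mul, norm_prod] using this
  nlinarith [mul_le_mul_of_nonneg_left hle (norm_nonneg w)]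

theorem card_roots_blaschkeFiberPoly {a : ι → ℂ} (ha : ∀ k, ‖a k‖ ≤ 1) {c w : ℂ}
    (hw : ‖w‖ < ‖c‖) : Multiset.card (blaschkeFiberPoly c w a).roots = Fintype.card ι := by
  rw [IsAlgClosed.card_roots_eq_natDegree, natDegree_blaschkeFiberPoly ha hw]

theorem mem_roots_blaschkeFiberPoly {a : ι → ℂ} (ha : ∀ k, ‖a k‖ < 1) {c w : ℂ}
    (hw : ‖w‖ < ‖c‖) {z : ℂ} :
    z ∈ (blaschkeFiberPoly c w a).roots ↔
      ‖z‖ < 1 ∧ c * ∏ k, (z - a k) / (1 - conj (a k) * z) = w := by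
  rw [mem_roots (blaschkeFiberPoly_ne_zero (fun k => (ha k).le) hw)]
  refine ⟨fun hz => ?_, fun ⟨hz, hw⟩ => ?_⟩
  · have hz1 := norm_lt_one_of_isRoot_blaschkeFiberPoly ha hw hz
    rw [← sub_eq_zero, blaschke_sub_eq_eval_div_eval ha c w hz1, hz.eq_zero, zero_div]
    exact ⟨hz1, rfl⟩
  · rw [← sub_eq_zero, blaschke_sub_eq_eval_div_eval ha c w hz, div_eq_zero_iff] at hw
    exact hw.resolve_right (eval_blaschkeDenominator_ne_zero ha hz)

end BlaschkeFiber

/-- For a Blaschke product `B` of order `n ≥ 1` and any `w ∈ 𝔻`, the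
fiber `{z ∈ 𝔻 : B(z) = w}` is finite and nonempty, and the zeros of `B(·) - w` in `𝔻`
counted with multiplicity number exactly `n`. -/
theorem stmt7 (n : ℕ) (hn : 1 ≤ n) (B : ℂ → ℂ) (hB : IsBlaschke n B)
    (w : ℂ) (hw : w ∈ ball (0 : ℂ) 1) :
    ∃ F : Finset ℂ, (↑F : Set ℂ) = {z ∈ ball (0 : ℂ) 1 | B z = w} ∧ F.Nonempty ∧
      ∑ z ∈ F, vanishOrder (fun ζ => B ζ - w) z = n := by
  obtain ⟨θ, a, ha, hBeq⟩ := hB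
  simp only [mem_ball_zero_iff] at ha hw hBeq ⊢
  set c := Complex.exp (θ * Complex.I)
  set P := blaschkeFiberPoly c w a
  have hwc : ‖w‖ < ‖c‖ := by rwa [Complex.norm_exp_ofReal_mul_I]
  have hroots (z : ℂ) : z ∈ P.roots ↔ ‖z‖ < 1 ∧ B z = w := by
    rw [mem_roots_blaschkeFiberPoly ha hwc]
    exact and_congr_right fun hz => by rw [hBeq z hz]
  have hcard : Multiset.card P.roots = n := by
    rw [card_roots_blaschkeFiberPoly (fun k => (ha k).le) hwc, Fintype.card_fin]
  have horder (z : ℂ) (hz : ‖z‖ < 1) : vanishOrder (fun ζ => B ζ - w) z = P.roots.count z := by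
    rw [count_roots]
    refine vanishOrder_eq_rootMultiplicity (blaschkeFiberPoly_ne_zero (fun k => (ha k).le) hwc)
      (eval_blaschkeDenominator_ne_zero ha hz) ?_
    filter_upwards [(isOpen_lt continuous_norm continuous_const).mem_nhds hz] with ζ hζ
    rw [hBeq ζ hζ, blaschke_sub_eq_eval_div_eval ha c w hζ]
  refine ⟨P.roots.toFinset, by ext; simp [hroots], ?_, ?_⟩
  · exact Multiset.toFinset_nonempty.2 (Multiset.card_pos.1 (hcard ▸ hn))
  · rw [Finset.sum_congr rfl fun z hz => horder z ((hroots z).1 (Multiset.mem_toFinset.1 hz)).1,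
      Multiset.toFinset_sum_count_eq, hcard]
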